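/- arXiv:1811.11022 — 2 statements merged into one kernel-verified Lean document; each statement's English description precedes it below -/
import Mathlib

section
/- Let (R, 𝔪, k) be a local F-finite ring of prime characteristic p > 0 and let M be a finitely generated R-module. If a_{e_0}(M) > 0 for some e_0 ≥ 1, then sr(M) = sr(R). -/
noncomputable section

open CategoryTheory Filter
open scoped Classical

universe u v

/-- The `R`-module `F^e_* M`: the module `M` with scalars acting through the `e`-th iterate
of the Frobenius endomorphism of `R`. -/
def FStar (R : Type u) [CommSemiring R] (p : ℕ) [ExpChar R p] (e : ℕ) (M : Type v) : Type v := M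

instance FStar.instAddCommGroup (R : Type u) [CommSemiring R] (p : ℕ) [ExpChar R p] (e : ℕ)
    (M : Type v) [AddCommGroup M] : AddCommGroup (FStar R p e M) := ‹AddCommGroup M›

instance FStar.instModule (R : Type u) [CommSemiring R] (p : ℕ) [ExpChar R p] (e : ℕ)
    (M : Type v) [AddCommGroup M] [Module R M] : Module R (FStar R p e M) :=
  Module.compHom M (iterateFrobenius R p e)

/-- The identity of `M`, viewed as a map `M → F^e_* M`. -/
def FStar.mk (R : Type u) [CommSemiring R] (p : ℕ) [ExpChar R p] (e : ℕ) {M : Type v}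
    (m : M) : FStar R p e M := m

theorem charP_of_ringHom {R : Type u} [CommRing R] (p : ℕ) [Fact p.Prime] [CharP R p]
    (S : Type v) [CommRing S] [Nontrivial S] (f : R →+* S) : CharP S p :=
  (CharP.charP_iff_prime_eq_zero Fact.out).2 (by
    rw [← map_natCast f p, CharP.cast_eq_zero, map_zero])

instance instCharPLocalizationAtPrime (R : Type u) [CommRing R] (p : ℕ) [Fact p.Prime]
    [CharP R p] (P : Ideal R) [P.IsPrime] : CharP (Localization.AtPrime P) p :=
  charP_of_ringHom p _ (algebraMap R (Localization.AtPrime P))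

instance instCharPResidueField (R : Type u) [CommRing R] (p : ℕ) [Fact p.Prime] [CharP R p]
    [IsLocalRing R] : CharP (IsLocalRing.ResidueField R) p :=
  charP_of_ringHom p _ (IsLocalRing.residue R)

/-- `R` is F-finite: it is a finitely generated module over itself via Frobenius. -/
def FFinite (R : Type u) [CommRing R] (p : ℕ) [Fact p.Prime] [CharP R p] : Prop :=
  Module.Finite R (FStar R p 1 R)

/-- The maximal rank of a free direct summand of `M`, equivalently the maximal rank of a
finite free module admitting a surjective `R`-linear map from `M`. -/
noncomputable def frk (R : Type u) [CommRing R] (M : Type v) [AddCommGroup M]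
    [Module R M] : ℕ :=
  sSup {n | ∃ f : M →ₗ[R] (Fin n → R), Function.Surjective f}

/-- The splitting rate `sr(M)`: `-1` if no `F^e_* M` (`e ≥ 1`) has a nonzero free summand,
and otherwise the largest `ℓ ≥ 0` such that `liminf_e a_e(M)/p^{eℓ} > 0`. -/
noncomputable def srM (R : Type u) [CommRing R] (p : ℕ) [Fact p.Prime] [CharP R p]
    (M : Type v) [AddCommGroup M] [Module R M] : ℤ :=
  if ∀ e : ℕ, 1 ≤ e → frk R (FStar R p e M) = 0 then -1
  else (sSup {ℓ : ℕ |
    0 < atTop.liminf fun e : ℕ => (frk R (FStar R p e M) : ℝ) / (p : ℝ) ^ (e * ℓ)} : ℕ)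

/-- `R` is F-pure (equivalently, F-split): the Frobenius map `R → F_* R` splits. -/
def FPure (R : Type u) [CommRing R] (p : ℕ) [Fact p.Prime] [CharP R p] : Prop :=
  ∃ g : FStar R p 1 R →ₗ[R] R,
    g.comp (LinearMap.toSpanSingleton R (FStar R p 1 R) (FStar.mk R p 1 (1 : R))) =
      LinearMap.id

/-- The `e`-th splitting set `I_e = {r ∈ R ∣ (R → F^e_* R, 1 ↦ F^e_* r)` is not split`}`. -/
def splitSet (R : Type u) [CommRing R] (p : ℕ) [Fact p.Prime] [CharP R p] (e : ℕ) : Set R :=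
  {r | ¬ ∃ g : FStar R p e R →ₗ[R] R,
    g.comp (LinearMap.toSpanSingleton R (FStar R p e R) (FStar.mk R p e r)) = LinearMap.id}

/-- The splitting prime `𝒫 = ∩_{e ≥ 1} I_e` of a local ring, as a subset of `R`. -/
def splittingPrimeSet (R : Type u) [CommRing R] (p : ℕ) [Fact p.Prime] [CharP R p] : Set R :=
  ⋂ e ∈ {e : ℕ | 1 ≤ e}, splitSet R p e

/-- The F-split locus of the module `M`. -/
def fsl (R : Type u) [CommRing R] (p : ℕ) [Fact p.Prime] [CharP R p]
    (M : Type u) [AddCommGroup M] [Module R M] : Set (PrimeSpectrum R) :=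
  {P | ∃ e : ℕ, 0 < e ∧ 0 < frk (Localization.AtPrime P.asIdeal)
    (FStar (Localization.AtPrime P.asIdeal) p e
      (LocalizedModule P.asIdeal.primeCompl M))}

/-- `R` is strongly F-regular. -/
def StronglyFRegular (R : Type u) [CommRing R] (p : ℕ) [Fact p.Prime] [CharP R p] : Prop :=
  ∀ c : R, c ≠ 0 → ∃ e : ℕ, 1 ≤ e ∧
    ∃ φ : FStar R p e R →ₗ[R] R, φ (FStar.mk R p e c) = 1

/-! # frk basics -/

def frkSet (R : Type u) [CommRing R] (N : Type v) [AddCommGroup N] [Module R N] : Set ℕ :=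
  {n | ∃ f : N →ₗ[R] (Fin n → R), Function.Surjective f}

section frk
variable {R : Type u} [CommRing R] {N : Type v} [AddCommGroup N] [Module R N]

lemma zero_mem_frkSet : 0 ∈ frkSet R N :=
  ⟨0, fun y => ⟨0, funext fun i => i.elim0⟩⟩

lemma frkSet_bddAbove [Nontrivial R] [Module.Finite R N] : BddAbove (frkSet R N) := by
  obtain ⟨m, π, hπ⟩ := Module.Finite.exists_fin' R N
  refine ⟨m, fun a ha => ?_⟩
  obtain ⟨f, hf⟩ := ha
  exact le_of_fin_surjective R (f.comp π) (hf.comp hπ)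

lemma frk_mem_frkSet (hb : BddAbove (frkSet R N)) : frk R N ∈ frkSet R N :=
  Nat.sSup_mem ⟨0, zero_mem_frkSet⟩ hb

lemma le_frk (hb : BddAbove (frkSet R N)) {a : ℕ} (ha : a ∈ frkSet R N) : a ≤ frk R N :=
  le_csSup hb ha

lemma frk_pos (hb : BddAbove (frkSet R N)) (g : N →ₗ[R] R) (hg : Function.Surjective g) :
    0 < frk R N := by
  refine lt_of_lt_of_le one_pos (le_frk hb ?_)
  refine ⟨(LinearMap.pi fun _ : Fin 1 => LinearMap.id).comp g, fun y => ?_⟩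
  obtain ⟨x, hx⟩ := hg (y 0)
  exact ⟨x, funext fun i => by simpa [Subsingleton.elim i 0] using hx⟩

lemma exists_surj_R_of_frk_pos (hb : BddAbove (frkSet R N)) (h : 0 < frk R N) :
    ∃ g : N →ₗ[R] R, Function.Surjective g := by
  obtain ⟨f, hf⟩ := frk_mem_frkSet hb
  have hproj : Function.Surjective
      (LinearMap.proj (R := R) (φ := fun _ : Fin (frk R N) => R) ⟨0, h⟩) :=
    fun r => ⟨fun _ => r, rfl⟩
  exact ⟨(LinearMap.proj ⟨0, h⟩).comp f, by rw [LinearMap.coe_comp]; exact hproj.comp hf⟩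

end frk

/-! # Local ring: coordinates lemma -/

section localring
variable {R : Type u} [CommRing R] [IsLocalRing R]
variable {N : Type v} [AddCommGroup N] [Module R N]

/-- A shear automorphism of `R^k`: `y ↦ y - ℓ(y) • v` where `ℓ(v) = 0`. -/
def shear {k : ℕ} (ℓ : (Fin k → R) →ₗ[R] R) (v : Fin k → R) (hv : ℓ v = 0) :
    (Fin k → R) ≃ₗ[R] (Fin k → R) :=
  LinearEquiv.ofLinear (LinearMap.id - ℓ.smulRight v) (LinearMap.id + ℓ.smulRight v)
    (by
      apply LinearMap.ext; intro y
      simp [hv, smul_smul])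
    (by
      apply LinearMap.ext; intro y
      simp [hv, smul_smul])

lemma shear_apply {k : ℕ} (ℓ : (Fin k → R) →ₗ[R] R) (v : Fin k → R) (hv : ℓ v = 0)
    (y : Fin k → R) : shear ℓ v hv y = y - ℓ y • v := rfl

lemma exists_unit_coord {n a : ℕ} (f : (Fin n → N) →ₗ[R] (Fin (a + 1) → R))
    (hf : Function.Surjective f) :
    ∃ (i₀ : Fin n) (x₀ : N), f (Pi.single i₀ x₀) (Fin.last a) = 1 := by
  obtain ⟨z, hz⟩ := hf (Pi.single (Fin.last a) 1)
  have h1 : ∑ i : Fin n, f (Pi.single i (z i)) (Fin.last a) = 1 := by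
    calc ∑ i : Fin n, f (Pi.single i (z i)) (Fin.last a)
        = f (∑ i : Fin n, Pi.single i (z i)) (Fin.last a) := by
          rw [map_sum]; simp [Finset.sum_apply]
      _ = f z (Fin.last a) := by rw [Finset.univ_sum_single]
      _ = 1 := by rw [hz, Pi.single_eq_same]
  have hunit : ∃ i : Fin n, IsUnit (f (Pi.single i (z i)) (Fin.last a)) := by
    by_contra hc
    push_neg at hc
    have hmem : ∀ i : Fin n, f (Pi.single i (z i)) (Fin.last a) ∈ IsLocalRing.maximalIdeal R :=
      fun i => hc i
    have : (1 : R) ∈ IsLocalRing.maximalIdeal R := h1 ▸ Ideal.sum_mem _ fun i _ => hmem i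
    exact (IsLocalRing.maximalIdeal.isMaximal R).ne_top (Ideal.eq_top_of_isUnit_mem _ this isUnit_one)
  obtain ⟨i₀, hu⟩ := hunit
  refine ⟨i₀, (↑hu.unit⁻¹ : R) • z i₀, ?_⟩
  rw [Pi.single_smul, map_smul]
  simp only [Pi.smul_apply, smul_eq_mul]
  exact hu.unit.inv_mul

/-- Extend an endomorphism of `R^a` to `R^(a+1)` fixing the last coordinate. -/
def extLast {a : ℕ} (T : (Fin a → R) →ₗ[R] (Fin a → R)) :
    (Fin (a + 1) → R) →ₗ[R] (Fin (a + 1) → R) where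
  toFun y := Fin.snoc (T (y ∘ Fin.castSucc)) (y (Fin.last a))
  map_add' y z := by
    funext t
    refine Fin.lastCases ?_ (fun s => ?_) t
    · simp
    · have h : (y + z) ∘ Fin.castSucc = y ∘ Fin.castSucc + z ∘ Fin.castSucc := rfl
      simp [h]
  map_smul' r y := by
    funext t
    refine Fin.lastCases ?_ (fun s => ?_) t
    · simp
    · have h : (r • y) ∘ Fin.castSucc = r • (y ∘ Fin.castSucc) := rfl
      simp [h]

lemma extLast_comp {a : ℕ} (T T' : (Fin a → R) →ₗ[R] (Fin a → R))
    (h : T.comp T' = LinearMap.id) : (extLast T).comp (extLast T') = LinearMap.id := by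
  apply LinearMap.ext; intro y
  have hT : ∀ w : Fin a → R, T (T' w) = w := fun w => congrArg (fun L => L w) h ▸ rfl
  funext t
  refine Fin.lastCases ?_ (fun s => ?_) t
  · simp [extLast]
  · have h1 : ((Fin.snoc (T' (y ∘ Fin.castSucc)) (y (Fin.last a)) : Fin (a+1) → R) ∘
        Fin.castSucc) = T' (y ∘ Fin.castSucc) := by
      funext s'; simp
    simp only [extLast, LinearMap.comp_apply, LinearMap.coe_mk, AddHom.coe_mk,
      LinearMap.id_apply]
    rw [h1]
    rw [Fin.snoc_castSucc]
    have := congrArg (fun L : (Fin a → R) →ₗ[R] (Fin a → R) => L (y ∘ Fin.castSucc) s) h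
    simpa using this

/-- The extension of a linear automorphism of `R^a` to `R^(a+1)`. -/
def extLastEquiv {a : ℕ} (T : (Fin a → R) ≃ₗ[R] (Fin a → R)) :
    (Fin (a + 1) → R) ≃ₗ[R] (Fin (a + 1) → R) :=
  LinearEquiv.ofLinear (extLast T.toLinearMap) (extLast T.symm.toLinearMap)
    (extLast_comp _ _ (by ext w; simp))
    (extLast_comp _ _ (by ext w; simp))

lemma extLastEquiv_apply {a : ℕ} (T : (Fin a → R) ≃ₗ[R] (Fin a → R)) (y : Fin (a + 1) → R) :
    extLastEquiv T y = Fin.snoc (T (y ∘ Fin.castSucc)) (y (Fin.last a)) := rfl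

lemma snoc_zero_one {a : ℕ} :
    (Fin.snoc (0 : Fin a → R) (1 : R) : Fin (a + 1) → R) = Pi.single (Fin.last a) 1 := by
  funext t
  refine Fin.lastCases ?_ (fun s => ?_) t
  · simp
  · rw [Fin.snoc_castSucc]
    rw [Pi.single_eq_of_ne (Fin.castSucc_lt_last s).ne]
    rfl

lemma exists_coords : ∀ (a : ℕ) {n : ℕ} (f : (Fin n → N) →ₗ[R] (Fin a → R)),
    Function.Surjective f →
    ∃ (Θ : (Fin a → R) ≃ₗ[R] (Fin a → R)) (ix : Fin a → Fin n) (x : Fin a → N),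
      ∀ t, Θ (f (Pi.single (ix t) (x t))) = Pi.single t 1 := by
  intro a
  induction a with
  | zero =>
    intro n f _
    exact ⟨LinearEquiv.refl R _, Fin.elim0, Fin.elim0, fun t => t.elim0⟩
  | succ a IH =>
    intro n f hf
    obtain ⟨i₀, x₀, hw⟩ := exists_unit_coord f hf
    set w : Fin (a + 1) → R := f (Pi.single i₀ x₀) with hwdef
    -- first shear: sends w to e_last
    have hv1 : (LinearMap.proj (R := R) (φ := fun _ : Fin (a+1) => R) (Fin.last a))
        (w - Pi.single (Fin.last a) 1) = 0 := by
      simp only [LinearMap.proj_apply, Pi.sub_apply, Pi.single_eq_same, hw, sub_self]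
    set θ₁ := shear (LinearMap.proj (Fin.last a)) (w - Pi.single (Fin.last a) 1) hv1 with hθ₁
    have hθ₁w : θ₁ w = Pi.single (Fin.last a) 1 := by
      rw [hθ₁, shear_apply]
      simp [hw]
    set g : (Fin n → N) →ₗ[R] (Fin (a + 1) → R) := θ₁.toLinearMap.comp f with hg
    have hgsurj : Function.Surjective g := by
      rw [hg]; rw [LinearMap.coe_comp]; exact θ₁.surjective.comp hf
    -- truncation
    set trunc : (Fin (a + 1) → R) →ₗ[R] (Fin a → R) :=
      LinearMap.funLeft R R Fin.castSucc with htrunc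
    have htruncsurj : Function.Surjective trunc :=
      LinearMap.funLeft_surjective_of_injective R R _ (Fin.castSucc_injective a)
    obtain ⟨Θ', ix', x', hIH⟩ := IH (trunc.comp g) (by
      rw [LinearMap.coe_comp]; exact htruncsurj.comp hgsurj)
    -- the correction shear
    set c : Fin a → R := fun s => g (Pi.single (ix' s) (x' s)) (Fin.last a) with hc
    set ℓf : (Fin (a + 1) → R) →ₗ[R] R :=
      ∑ s : Fin a, c s • LinearMap.proj (Fin.castSucc s) with hℓf
    have hℓf_apply : ∀ y : Fin (a+1) → R, ℓf y = ∑ s : Fin a, c s * y (Fin.castSucc s) := by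
      intro y
      rw [hℓf]
      simp [LinearMap.sum_apply]
    have hv2 : ℓf (Pi.single (Fin.last a) 1) = 0 := by
      rw [hℓf_apply]
      refine Finset.sum_eq_zero fun s _ => ?_
      rw [Pi.single_eq_of_ne (Fin.castSucc_lt_last s).ne, mul_zero]
    set θC := shear ℓf (Pi.single (Fin.last a) 1) hv2 with hθC
    refine ⟨(θ₁.trans (extLastEquiv Θ')).trans θC,
      Fin.snoc ix' i₀, Fin.snoc x' x₀, fun t => ?_⟩
    refine Fin.lastCases ?_ (fun s => ?_) t
    · -- t = last
      simp only [Fin.snoc_last, LinearEquiv.trans_apply]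
      have h1 : θ₁ (f (Pi.single i₀ x₀)) = Pi.single (Fin.last a) 1 := hθ₁w
      rw [h1]
      have h2 : extLastEquiv Θ' (Pi.single (Fin.last a) 1) = Pi.single (Fin.last a) 1 := by
        rw [extLastEquiv_apply]
        have hz : ((Pi.single (Fin.last a) 1 : Fin (a+1) → R) ∘ Fin.castSucc) = 0 := by
          funext s; simp [Pi.single_eq_of_ne (Fin.castSucc_lt_last s).ne]
        rw [hz, map_zero, Pi.single_eq_same, snoc_zero_one]
      rw [h2, hθC, shear_apply, hv2, zero_smul, sub_zero]
    · -- t = castSucc s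
      simp only [Fin.snoc_castSucc, LinearEquiv.trans_apply]
      have hIHs := hIH s
      have hu : trunc (g (Pi.single (ix' s) (x' s))) = (g (Pi.single (ix' s) (x' s))) ∘ Fin.castSucc := rfl
      have h1 : θ₁ (f (Pi.single (ix' s) (x' s))) = g (Pi.single (ix' s) (x' s)) := rfl
      rw [h1]
      have h2 : extLastEquiv Θ' (g (Pi.single (ix' s) (x' s))) =
          Fin.snoc (Pi.single s 1) (c s) := by
        rw [extLastEquiv_apply]
        have h3 : Θ' ((g (Pi.single (ix' s) (x' s))) ∘ Fin.castSucc) = Pi.single s 1 := by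
          rw [← hu]
          exact hIHs
        rw [h3]
      rw [h2, hθC, shear_apply]
      have hℓv : ℓf (Fin.snoc (Pi.single s 1) (c s)) = c s := by
        rw [hℓf_apply]
        have : ∀ r : Fin a, c r * (Fin.snoc (Pi.single s 1) (c s) : Fin (a+1) → R) (Fin.castSucc r)
            = c r * (Pi.single s 1 : Fin a → R) r := by
          intro r; rw [Fin.snoc_castSucc]
        rw [Finset.sum_congr rfl fun r _ => this r]
        simp [Pi.single_apply]
      rw [hℓv]
      funext t'
      refine Fin.lastCases ?_ (fun r => ?_) t'
      · simp [Pi.single_eq_of_ne (Fin.castSucc_lt_last s).ne,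
          Pi.single_eq_of_ne (Fin.castSucc_lt_last s).ne']
      · simp only [Pi.sub_apply, Fin.snoc_castSucc, Pi.smul_apply, smul_eq_mul]
        rw [Pi.single_eq_of_ne (Fin.castSucc_lt_last r).ne, mul_zero, sub_zero]
        rw [Pi.single_apply, Pi.single_apply]
        simp [Fin.castSucc_inj]

lemma surjective_of_single_in_range {m : ℕ} (g : N →ₗ[R] (Fin m → R))
    (h : ∀ j, ∃ x, g x = Pi.single j 1) : Function.Surjective g := by
  intro y
  choose x hx using h
  refine ⟨∑ j, y j • x j, ?_⟩
  rw [map_sum]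
  have : ∀ j : Fin m, g (y j • x j) = Pi.single j (y j) := by
    intro j
    rw [map_smul, hx, ← Pi.single_smul, smul_eq_mul, mul_one]
  rw [Finset.sum_congr rfl fun j _ => this j, Finset.univ_sum_single]

lemma exists_partition {n a : ℕ} (f : (Fin n → N) →ₗ[R] (Fin a → R))
    (hf : Function.Surjective f) :
    ∃ d : Fin n → ℕ, (∑ i, d i) = a ∧
      ∀ i, ∃ g : N →ₗ[R] (Fin (d i) → R), Function.Surjective g := by
  obtain ⟨Θ, ix, x, hx⟩ := exists_coords a f hf
  classical
  refine ⟨fun i => (Finset.univ.filter fun t => ix t = i).card, ?_, fun i => ?_⟩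
  · rw [← Finset.card_eq_sum_card_fiberwise (fun t _ => Finset.mem_univ (ix t))]
    simp
  · set Si := Finset.univ.filter fun t => ix t = i with hSi
    set σ : Fin Si.card ≃o {t // t ∈ Si} := Si.orderIsoOfFin rfl with hσ
    set emb : Fin Si.card → Fin a := fun j => (σ j : Fin a) with hemb
    have hembinj : Function.Injective emb := fun j j' hjj' =>
      σ.injective (Subtype.ext hjj')
    set sing : N →ₗ[R] (Fin n → N) := LinearMap.single R (fun _ => N) i with hsing
    refine ⟨(LinearMap.funLeft R R emb).comp (Θ.toLinearMap.comp (f.comp sing)),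
      surjective_of_single_in_range _ fun j => ?_⟩
    have hmem : emb j ∈ Si := (σ j).2
    have hix : ix (emb j) = i := (Finset.mem_filter.mp hmem).2
    refine ⟨x (emb j), ?_⟩
    have h1 : f (sing (x (emb j))) = f (Pi.single (ix (emb j)) (x (emb j))) := by
      rw [hix]; rfl
    simp only [LinearMap.comp_apply]
    rw [h1]
    simp only [LinearEquiv.coe_coe]
    rw [hx]
    funext j'
    rw [LinearMap.funLeft_apply]
    rw [Pi.single_apply, Pi.single_apply]
    simp [hembinj.eq_iff]

lemma le_mul_frk (hb : BddAbove (frkSet R N)) {n a : ℕ}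
    (f : (Fin n → N) →ₗ[R] (Fin a → R)) (hf : Function.Surjective f) :
    a ≤ n * frk R N := by
  obtain ⟨d, hsum, hd⟩ := exists_partition f hf
  have : ∀ i, d i ≤ frk R N := fun i => le_frk hb (hd i)
  calc a = ∑ i, d i := hsum.symm
    _ ≤ ∑ _i : Fin n, frk R N := Finset.sum_le_sum fun i _ => this i
    _ = n * frk R N := by rw [Finset.sum_const, Finset.card_univ, Fintype.card_fin, smul_eq_mul]

end localring

/-! # FStar plumbing -/

/-- The identity of `F^e_* M`, viewed as a map to `M`. -/
def FStar.down (R : Type u) [CommSemiring R] (p : ℕ) [ExpChar R p] (e : ℕ) {M : Type v}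
    (m : FStar R p e M) : M := m

section fstar
variable {R : Type u} [CommRing R] {p : ℕ} [Fact p.Prime] [CharP R p]

/-- Pushforward of a linear map to `F^e`. -/
def FStar.map (e : ℕ) {M N₁ : Type v} [AddCommGroup M] [Module R M]
    [AddCommGroup N₁] [Module R N₁] (f : M →ₗ[R] N₁) :
    FStar R p e M →ₗ[R] FStar R p e N₁ where
  toFun m := FStar.mk R p e (f m)
  map_add' x y := congrArg (FStar.mk R p e) (f.map_add x y)
  map_smul' r m := f.map_smul (iterateFrobenius R p e r) m

lemma FStar.map_surjective (e : ℕ) {M N₁ : Type v} [AddCommGroup M] [Module R M]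
    [AddCommGroup N₁] [Module R N₁] (f : M →ₗ[R] N₁) (hf : Function.Surjective f) :
    Function.Surjective (FStar.map (p := p) e f) := hf

/-- `F^e` of a pi-power of `R` is the pi-power of `F^e R`. -/
def FStar.piEquiv (e n : ℕ) :
    FStar R p e (Fin n → R) ≃ₗ[R] (Fin n → FStar R p e R) where
  toFun y := y
  invFun y := y
  map_add' _ _ := rfl
  map_smul' _ _ := rfl
  left_inv _ := rfl
  right_inv _ := rfl

/-- Twist a linear map `F^{e₀} M → N` to `F^{e₀+e} M → F^e N`. -/
def FStar.twist (e₀ e : ℕ) {M N₁ : Type v} [AddCommGroup M] [Module R M]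
    [AddCommGroup N₁] [Module R N₁] (g : FStar R p e₀ M →ₗ[R] N₁) :
    FStar R p (e₀ + e) M →ₗ[R] FStar R p e N₁ where
  toFun m := FStar.mk R p e (g m)
  map_add' x y := congrArg (FStar.mk R p e) (g.map_add x y)
  map_smul' r m := by
    have heq : iterateFrobenius R p e r • FStar.mk R p e₀ (FStar.down R p (e₀ + e) m)
        = FStar.mk R p e₀ (FStar.down R p (e₀ + e) (r • m)) := by
      show iterateFrobenius R p e₀ (iterateFrobenius R p e r) • FStar.down R p (e₀ + e) m
          = iterateFrobenius R p (e₀ + e) r • FStar.down R p (e₀ + e) m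
      rw [iterateFrobenius_add_apply]
    have h2 := g.map_smul (iterateFrobenius R p e r)
      (FStar.mk R p e₀ (FStar.down R p (e₀ + e) m))
    rw [heq] at h2
    exact h2

lemma FStar.twist_surjective (e₀ e : ℕ) {M N₁ : Type v} [AddCommGroup M] [Module R M]
    [AddCommGroup N₁] [Module R N₁] (g : FStar R p e₀ M →ₗ[R] N₁)
    (hg : Function.Surjective g) :
    Function.Surjective (FStar.twist e₀ e g) := hg

/-! ## Finiteness -/

variable (R p) in
def FrobGen (e : ℕ) : Prop :=
  ∃ (n : ℕ) (g : Fin n → R), ∀ r : R, ∃ c : Fin n → R, r = ∑ i, (c i) ^ (p ^ e) * g i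

lemma frobGen_zero : FrobGen R p 0 := by
  refine ⟨1, fun _ => 1, fun r => ⟨fun _ => r, ?_⟩⟩
  simp

lemma frobGen_of_finite (e : ℕ) [Module.Finite R (FStar R p e R)] : FrobGen R p e := by
  obtain ⟨n, f, hf⟩ := Module.Finite.exists_fin' R (FStar R p e R)
  refine ⟨n, fun i => FStar.down R p e (f (Pi.single i 1)), fun r => ?_⟩
  obtain ⟨c, hc⟩ := hf (FStar.mk R p e r)
  refine ⟨c, ?_⟩
  have h1 : (FStar.mk R p e r : FStar R p e R) = ∑ i, c i • f (Pi.single i 1) := by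
    rw [← hc]
    have h2 : (c : Fin n → R) = ∑ i, c i • (Pi.single i (1 : R) : Fin n → R) := by
      funext j
      simp [Finset.sum_apply, Pi.single_apply]
    conv_lhs => rw [h2]
    rw [map_sum]
    exact Finset.sum_congr rfl fun i _ => f.map_smul (c i) (Pi.single i 1)
  have h3 : r = ∑ i, iterateFrobenius R p e (c i) * FStar.down R p e (f (Pi.single i 1)) := h1
  exact h3

lemma frobGen_succ (e : ℕ) (h1 : FrobGen R p 1) (he : FrobGen R p e) :
    FrobGen R p (e + 1) := by
  obtain ⟨n₁, xg, hx⟩ := h1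
  obtain ⟨m, yg, hy⟩ := he
  refine ⟨n₁ * m, fun t => (fun s : Fin n₁ × Fin m => (yg s.2) ^ p * xg s.1)
    (finProdFinEquiv.symm t), fun r => ?_⟩
  obtain ⟨a, ha⟩ := hx r
  choose b hb using fun i => hy (a i)
  refine ⟨(fun s : Fin n₁ × Fin m => b s.1 s.2) ∘ finProdFinEquiv.symm, ?_⟩
  have key : ∀ i : Fin n₁, (a i) ^ p = ∑ j, (b i j) ^ (p ^ (e + 1)) * (yg j) ^ p := by
    intro i
    have h0 : (a i) ^ p = frobenius R p (a i) := rfl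
    rw [h0, hb i, map_sum]
    refine Finset.sum_congr rfl fun j _ => ?_
    show ((b i j) ^ (p ^ e) * yg j) ^ p = _
    rw [mul_pow, ← pow_mul, ← pow_succ]
  have main : r = ∑ s : Fin n₁ × Fin m, (b s.1 s.2) ^ (p ^ (e + 1)) * ((yg s.2) ^ p * xg s.1) := by
    rw [ha, Fintype.sum_prod_type]
    refine Finset.sum_congr rfl fun i _ => ?_
    rw [pow_one, key i, Finset.sum_mul]
    exact Finset.sum_congr rfl fun j _ => by ring
  rw [main]
  exact (Equiv.sum_comp finProdFinEquiv.symm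
    (fun s : Fin n₁ × Fin m => (b s.1 s.2) ^ (p ^ (e + 1)) * ((yg s.2) ^ p * xg s.1))).symm

lemma finite_of_frobGen (e : ℕ) (h : FrobGen R p e) : Module.Finite R (FStar R p e R) := by
  obtain ⟨n, g, hg⟩ := h
  let f : (Fin n → R) →ₗ[R] FStar R p e R :=
    { toFun := fun c => ∑ i, c i • FStar.mk R p e (g i)
      map_add' := by
        intro x y
        show ∑ i, (x i + y i) • FStar.mk R p e (g i)
            = (∑ i, x i • FStar.mk R p e (g i)) + ∑ i, y i • FStar.mk R p e (g i)
        rw [← Finset.sum_add_distrib]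
        exact Finset.sum_congr rfl fun i _ => add_smul (x i) (y i) (FStar.mk R p e (g i))
      map_smul' := by
        intro r x
        show ∑ i, (r * x i) • FStar.mk R p e (g i)
            = r • ∑ i, x i • FStar.mk R p e (g i)
        rw [Finset.smul_sum]
        exact Finset.sum_congr rfl fun i _ => mul_smul r (x i) (FStar.mk R p e (g i)) }
  refine Module.Finite.of_surjective f fun r => ?_
  obtain ⟨c, hc⟩ := hg r
  refine ⟨c, ?_⟩
  show ∑ i, c i • FStar.mk R p e (g i) = r
  have : ∀ i : Fin n, c i • FStar.mk R p e (g i) = FStar.mk R p e ((c i) ^ (p ^ e) * g i) :=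
    fun i => rfl
  rw [Finset.sum_congr rfl fun i _ => this i]
  exact (congrArg (FStar.mk R p e) hc).symm

lemma frobGen_all (hFF : FFinite R p) (e : ℕ) : FrobGen R p e := by
  have h1 : FrobGen R p 1 := by
    have : Module.Finite R (FStar R p 1 R) := hFF
    exact frobGen_of_finite 1
  induction e with
  | zero => exact frobGen_zero
  | succ e ih => exact frobGen_succ e h1 ih

lemma FStar.finite_R (hFF : FFinite R p) (e : ℕ) : Module.Finite R (FStar R p e R) :=
  finite_of_frobGen e (frobGen_all hFF e)

lemma FStar.finite (hFF : FFinite R p) (e : ℕ) (M : Type u) [AddCommGroup M] [Module R M]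
    [Module.Finite R M] : Module.Finite R (FStar R p e M) := by
  have hR : Module.Finite R (FStar R p e R) := FStar.finite_R hFF e
  obtain ⟨m, π, hπ⟩ := Module.Finite.exists_fin' R M
  obtain ⟨k, q, hq⟩ := Module.Finite.exists_fin' R (FStar R p e R)
  let Φ : (Fin m → (Fin k → R)) →ₗ[R] FStar R p e M :=
    (FStar.map e π).comp ((FStar.piEquiv e m).symm.toLinearMap.comp
      (LinearMap.pi fun i => q.comp (LinearMap.proj i)))
  have hΦ : Function.Surjective Φ := by
    have hpi : Function.Surjective
        (LinearMap.pi (R := R) fun i : Fin m => q.comp (LinearMap.proj i)) := by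
      intro y
      choose z hz using fun i => hq (y i)
      exact ⟨fun i => z i, funext fun i => hz i⟩
    simp only [Φ, LinearMap.coe_comp]
    exact (FStar.map_surjective e π hπ).comp
      (((FStar.piEquiv (R := R) (p := p) e m).symm.surjective).comp hpi)
  exact Module.Finite.of_surjective Φ hΦ

end fstar

/-! # Analysis: liminf positivity transfer -/

private lemma liminf_pos_transfer (u v : ℕ → ℝ) (hu0 : ∀ e, 0 ≤ u e) (hv0 : ∀ e, 0 ≤ v e)
    {C₁ C₂ : ℝ} (hC₁ : 0 < C₁) (hC₂ : 0 < C₂) (e₀ : ℕ)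
    (h1 : ∀ e, u e ≤ C₁ * v e) (h2 : ∀ e, v e ≤ C₂ * u (e₀ + e)) :
    (0 < atTop.liminf u ↔ 0 < atTop.liminf v) := by
  have hu0' : (0 : ℝ) ∈ {a | ∀ᶠ e in atTop, a ≤ u e} := Eventually.of_forall hu0
  have hv0' : (0 : ℝ) ∈ {a | ∀ᶠ e in atTop, a ≤ v e} := Eventually.of_forall hv0
  rw [Filter.liminf_eq, Filter.liminf_eq]
  constructor
  · intro h
    have hbdd : BddAbove {a | ∀ᶠ e in atTop, a ≤ u e} := by
      by_contra hb
      rw [Real.sSup_of_not_bddAbove hb] at h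
      exact lt_irrefl _ h
    obtain ⟨B, hB⟩ := hbdd
    have hex : ∃ a ∈ {a | ∀ᶠ e in atTop, a ≤ u e}, 0 < a := by
      by_contra hne
      push_neg at hne
      exact absurd (csSup_le ⟨0, hu0'⟩ fun a ha => hne a ha) (not_le.2 h)
    obtain ⟨a, ha, ha0⟩ := hex
    have hfreq : ∃ᶠ e in atTop, u e < B + 1 := by
      by_contra hf
      have h' : ∀ᶠ e in atTop, B + 1 ≤ u e := by
        simpa using Filter.not_frequently.mp hf
      have := hB (h' : (B + 1) ∈ {a | ∀ᶠ e in atTop, a ≤ u e})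
      linarith
    have hfreqv : ∃ᶠ e in atTop, v e < C₂ * (B + 1) := by
      rw [Filter.frequently_atTop] at hfreq ⊢
      intro n0
      obtain ⟨e, he, hue⟩ := hfreq (n0 + e₀)
      refine ⟨e - e₀, by omega, ?_⟩
      calc v (e - e₀) ≤ C₂ * u (e₀ + (e - e₀)) := h2 _
        _ = C₂ * u e := by congr 2; omega
        _ < C₂ * (B + 1) := by exact mul_lt_mul_of_pos_left hue hC₂
    have hbddv : BddAbove {a | ∀ᶠ e in atTop, a ≤ v e} := by
      refine ⟨C₂ * (B + 1), fun b hb => ?_⟩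
      obtain ⟨e, hve, hbe⟩ := (hfreqv.and_eventually hb).exists
      exact hbe.trans hve.le
    refine lt_csSup_of_lt hbddv (show a / C₁ ∈ _ from ?_) (div_pos ha0 hC₁)
    refine ha.mono fun e he => ?_
    rw [div_le_iff₀ hC₁]
    calc a ≤ u e := he
      _ ≤ C₁ * v e := h1 e
      _ = v e * C₁ := mul_comm _ _
  · intro h
    have hbdd : BddAbove {a | ∀ᶠ e in atTop, a ≤ v e} := by
      by_contra hb
      rw [Real.sSup_of_not_bddAbove hb] at h
      exact lt_irrefl _ h
    obtain ⟨B, hB⟩ := hbdd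
    have hex : ∃ a ∈ {a | ∀ᶠ e in atTop, a ≤ v e}, 0 < a := by
      by_contra hne
      push_neg at hne
      exact absurd (csSup_le ⟨0, hv0'⟩ fun a ha => hne a ha) (not_le.2 h)
    obtain ⟨a, ha, ha0⟩ := hex
    have hfreq : ∃ᶠ e in atTop, v e < B + 1 := by
      by_contra hf
      have h' : ∀ᶠ e in atTop, B + 1 ≤ v e := by
        simpa using Filter.not_frequently.mp hf
      have := hB (h' : (B + 1) ∈ {a | ∀ᶠ e in atTop, a ≤ v e})
      linarith
    have hfrequ : ∃ᶠ e in atTop, u e < C₁ * (B + 1) := by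
      refine hfreq.mono fun e he => ?_
      calc u e ≤ C₁ * v e := h1 e
        _ < C₁ * (B + 1) := mul_lt_mul_of_pos_left he hC₁
    have hbddu : BddAbove {a | ∀ᶠ e in atTop, a ≤ u e} := by
      refine ⟨C₁ * (B + 1), fun b hb => ?_⟩
      obtain ⟨e, hue, hbe⟩ := (hfrequ.and_eventually hb).exists
      exact hbe.trans hue.le
    refine lt_csSup_of_lt hbddu (show a / C₂ ∈ _ from ?_) (div_pos ha0 hC₂)
    simp only [Set.mem_setOf_eq] at ha ⊢
    rw [Filter.eventually_atTop] at ha ⊢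
    obtain ⟨N0, hN0⟩ := ha
    refine ⟨N0 + e₀, fun e he => ?_⟩
    have hv' : a ≤ v (e - e₀) := hN0 _ (by omega)
    have : a ≤ C₂ * u e := by
      calc a ≤ v (e - e₀) := hv'
        _ ≤ C₂ * u (e₀ + (e - e₀)) := h2 _
        _ = C₂ * u e := by congr 2; omega
    rw [div_le_iff₀ hC₂]
    linarith [this]


/-- over a local F-finite ring, if some `F^{e₀}_* M` has a nonzero free
summand then the splitting rate of `M` equals that of `R`. -/
theorem sr_eq_sr_ring_of_summand
    (R : Type u) [CommRing R] [IsNoetherianRing R] [IsLocalRing R]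
    (p : ℕ) [Fact p.Prime] [CharP R p] (hFF : FFinite R p)
    (M : Type u) [AddCommGroup M] [Module R M] [Module.Finite R M]
    (e₀ : ℕ) (he₀ : 1 ≤ e₀) (h : 0 < frk R (FStar R p e₀ M)) :
    srM R p M = srM R p R := by
  classical
  -- bounds for the frk sets
  have hBM : ∀ e : ℕ, BddAbove (frkSet R (FStar R p e M)) := fun e => by
    have := FStar.finite hFF e M
    exact frkSet_bddAbove
  have hBR : ∀ e : ℕ, BddAbove (frkSet R (FStar R p e R)) := fun e => by
    have := FStar.finite_R hFF e
    exact frkSet_bddAbove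
  -- generators of M
  obtain ⟨n, π, hπ⟩ := Module.Finite.exists_fin' R M
  -- the composite surjection (Fin n → F^e R) → F^e M
  have hψ : ∀ e : ℕ, ∃ ψ : (Fin n → FStar R p e R) →ₗ[R] FStar R p e M,
      Function.Surjective ψ := fun e => by
    refine ⟨(FStar.map e π).comp (FStar.piEquiv e n).symm.toLinearMap, ?_⟩
    rw [LinearMap.coe_comp, LinearEquiv.coe_toLinearMap]
    exact (FStar.map_surjective e π hπ).comp (FStar.piEquiv e n).symm.surjective
  -- surjection g₀ : F^{e₀} M → R
  obtain ⟨g₀, hg₀⟩ : ∃ g : FStar R p e₀ M →ₗ[R] R, Function.Surjective g :=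
    exists_surj_R_of_frk_pos (hBM e₀) h
  -- surjection F^{e₀} R → R, giving positivity of frk for R
  obtain ⟨gR, hgR⟩ : ∃ g : FStar R p e₀ R →ₗ[R] R, Function.Surjective g := by
    obtain ⟨ψ, hψ0⟩ := hψ e₀
    have hcomp : Function.Surjective ((LinearMap.pi fun _ : Fin 1 => g₀).comp ψ) := by
      rw [LinearMap.coe_comp]
      refine Function.Surjective.comp (fun y => ?_) hψ0
      obtain ⟨x, hx⟩ := hg₀ (y 0)
      exact ⟨x, funext fun i => by simpa [Subsingleton.elim i 0] using hx⟩
    obtain ⟨d, hsum, hd⟩ := exists_partition _ hcomp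
    have hone : ∃ i : Fin n, 0 < d i := by
      by_contra hno
      push_neg at hno
      have : ∀ i : Fin n, d i = 0 := fun i => Nat.le_zero.mp (hno i)
      rw [Finset.sum_congr rfl fun i _ => this i] at hsum
      simpa using hsum
    obtain ⟨i, hi⟩ := hone
    obtain ⟨g, hg⟩ := hd i
    have hproj : Function.Surjective
        (LinearMap.proj (R := R) (φ := fun _ : Fin (d i) => R) ⟨0, hi⟩) :=
      fun r => ⟨fun _ => r, rfl⟩
    refine ⟨(LinearMap.proj (⟨0, hi⟩ : Fin (d i))).comp g, ?_⟩
    rw [LinearMap.coe_comp]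
    exact hproj.comp hg
  have hRpos : 0 < frk R (FStar R p e₀ R) := frk_pos (hBR e₀) gR hgR
  -- inequality (i): frk (F^e M) ≤ n * frk (F^e R)
  have key1 : ∀ e : ℕ, frk R (FStar R p e M) ≤ n * frk R (FStar R p e R) := by
    intro e
    obtain ⟨f, hf⟩ := frk_mem_frkSet (hBM e)
    obtain ⟨ψ, hψ0⟩ := hψ e
    have : Function.Surjective (f.comp ψ) := by
      rw [LinearMap.coe_comp]; exact hf.comp hψ0
    exact le_mul_frk (hBR e) _ this
  -- inequality (ii): frk (F^e R) ≤ frk (F^{e₀+e} M)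
  have key2 : ∀ e : ℕ, frk R (FStar R p e R) ≤ frk R (FStar R p (e₀ + e) M) := by
    intro e
    obtain ⟨t, ht⟩ := frk_mem_frkSet (hBR e)
    refine le_frk (hBM (e₀ + e)) ⟨t.comp (FStar.twist e₀ e g₀), ?_⟩
    rw [LinearMap.coe_comp]
    exact ht.comp (FStar.twist_surjective e₀ e g₀ hg₀)
  -- resolve the `if`s
  have condM : ¬ ∀ e : ℕ, 1 ≤ e → frk R (FStar R p e M) = 0 := fun hc =>
    absurd (hc e₀ he₀) h.ne'
  have condR : ¬ ∀ e : ℕ, 1 ≤ e → frk R (FStar R p e R) = 0 := fun hc =>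
    absurd (hc e₀ he₀) hRpos.ne'
  rw [srM, srM, if_neg condM, if_neg condR]
  -- the two liminf sets agree
  have hp0 : (0 : ℝ) < (p : ℝ) := by
    have := (Fact.out : p.Prime).pos
    exact_mod_cast this
  have hsets : {ℓ : ℕ |
      0 < atTop.liminf fun e : ℕ => (frk R (FStar R p e M) : ℝ) / (p : ℝ) ^ (e * ℓ)}
      = {ℓ : ℕ |
      0 < atTop.liminf fun e : ℕ => (frk R (FStar R p e R) : ℝ) / (p : ℝ) ^ (e * ℓ)} := by
    ext ℓ
    simp only [Set.mem_setOf_eq]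
    refine liminf_pos_transfer _ _
      (fun e => by positivity) (fun e => by positivity)
      (show (0:ℝ) < (n : ℝ) + 1 by positivity) (show (0:ℝ) < (p : ℝ) ^ (e₀ * ℓ) by positivity)
      e₀ (fun e => ?_) (fun e => ?_)
    · -- u e ≤ (n+1) * v e
      rw [mul_div_assoc']
      have hle : (frk R (FStar R p e M) : ℝ) ≤ ((n : ℝ) + 1) * (frk R (FStar R p e R)) := by
        have h2 : frk R (FStar R p e M) ≤ (n + 1) * frk R (FStar R p e R) :=
          (key1 e).trans (Nat.mul_le_mul_right _ (Nat.le_succ n))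
        exact_mod_cast h2
      exact div_le_div_of_nonneg_right hle (by positivity) |>.trans_eq rfl
    · -- v e ≤ p^{e₀ℓ} * u (e₀+e)
      have hsplit : ((p : ℝ)) ^ ((e₀ + e) * ℓ) = (p : ℝ) ^ (e₀ * ℓ) * (p : ℝ) ^ (e * ℓ) := by
        rw [← pow_add, ← add_mul]
      rw [hsplit, mul_div_assoc']
      rw [mul_div_mul_left _ _ (by positivity : ((p:ℝ)) ^ (e₀ * ℓ) ≠ 0)]
      have hle : (frk R (FStar R p e R) : ℝ) ≤ (frk R (FStar R p (e₀ + e) M) : ℝ) := by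
        exact_mod_cast key2 e
      exact div_le_div_of_nonneg_right hle (by positivity)
  rw [hsets]
end
end

section
/- Let R be a strongly F-regular F-finite domain of prime characteristic p > 0. Then there exists ε > 0 such that for all e ≥ 1, a_e(R) ≥ ε·rank(F^e_*R), where rank(F^e_*R) denotes the generic rank of the finitely generated R-module F^e_*R (i.e., its dimension after tensoring with the fraction field of R). -/
noncomputable section

open CategoryTheory Filter
open scoped Classical

universe u v

/-!
Generic freeness of `F_* R` over the fraction field gives `R`-linear maps `F_* R → R^m` and
`R^m → F_* R` whose two composites are multiplication by some `c ≠ 0`. After rescaling, this is a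
`FrobeniusFrame` of level one: coordinates `π_i : F^e_* R → R` and elements `g_i` such that
`π_i (F^e_* (d g_j)) = δ_ij d` and `∑ π_i(x)^(p^e) g_i = d^(p^e - 1) x`. Frames compose with the
same constant `d`, so `F^e_* R` has a frame with `m^e` elements for every `e`. Its coordinates
embed `F^e_* R` into `R^(m^e)`, which bounds the generic rank by `m^e`. Strong F-regularity
provides `φ : F^e₀_* R → R` with `φ (F^e₀_* d) = 1`; then the maps `φ ∘ F^e₀_* π_i` send the
elements `F^(e₀+e)_* (d g_j)` to the standard basis of `R^(m^e)`, so `a_(e₀+e) ≥ m^e`. For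
`e ≤ e₀`, restricting `φ` along Frobenius splits `F^e_* R`, so `a_e ≥ 1`.
-/

theorem Nat.pow_sub_one_mul_add_pow_sub_one {p : ℕ} (hp : 0 < p) (a b : ℕ) :
    (p ^ a - 1) * p ^ b + (p ^ b - 1) = p ^ (a + b) - 1 := by
  have ha : 1 ≤ p ^ a := Nat.one_le_pow _ _ hp
  have hb : 1 ≤ p ^ b := Nat.one_le_pow _ _ hp
  have hab : p ^ b ≤ p ^ a * p ^ b := Nat.le_mul_of_pos_left _ ha
  rw [Nat.sub_mul, one_mul, pow_add]
  omega

theorem Nat.pow_le_succ_pow_mul_pow_sub (m a b : ℕ) : m ^ a ≤ (m + 1) ^ b * m ^ (a - b) := by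
  rcases le_total a b with h | h
  · rw [Nat.sub_eq_zero_of_le h, pow_zero, mul_one]
    exact (Nat.pow_le_pow_left m.le_succ a).trans (Nat.pow_le_pow_right m.succ_pos h)
  · rw [← Nat.add_sub_cancel' h, pow_add, Nat.add_sub_cancel_left]
    exact Nat.mul_le_mul_right _ (Nat.pow_le_pow_left m.le_succ b)

namespace FStar

variable {R : Type u} [CommRing R] {p : ℕ} [ExpChar R p]

def out {e : ℕ} {M : Type v} (x : FStar R p e M) : M := x

@[simp]
theorem out_mk {e : ℕ} {M : Type v} (x : M) : out (mk R p e x) = x := rfl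

@[simp]
theorem mk_out {e : ℕ} {M : Type v} (x : FStar R p e M) : mk R p e (out x) = x := rfl

@[simp]
theorem mk_zero (e : ℕ) {M : Type v} [AddCommGroup M] : mk R p e (0 : M) = 0 := rfl

theorem smul_mk (e : ℕ) (r x : R) : r • mk R p e x = mk R p e (r ^ p ^ e * x) := rfl

theorem out_smul (e : ℕ) (r : R) (x : FStar R p e R) : out (r • x) = r ^ p ^ e * out x := rfl

theorem out_sum {ι : Type*} (e : ℕ) (s : Finset ι) (f : ι → FStar R p e R) :
    out (∑ i ∈ s, f i) = ∑ i ∈ s, out (f i) := rfl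

instance instIsTorsionFree (e : ℕ) : Module.IsTorsionFree R (FStar R p e R) where
  isSMulRegular _ hr _ _ h := (hr.pow (p ^ e)).left h

section Module

variable {M : Type v} {N : Type*} [AddCommGroup M] [Module R M] [AddCommGroup N] [Module R N]

def map_s19 (e : ℕ) (f : M →ₗ[R] N) : FStar R p e M →ₗ[R] FStar R p e N where
  toFun x := mk R p e (f x)
  map_add' x y := f.map_add x y
  map_smul' r x := f.map_smul (r ^ p ^ e) x

@[simp]
theorem map_mk (e : ℕ) (f : M →ₗ[R] N) (x : M) : map_s19 e f (mk R p e x) = mk R p e (f x) := rfl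

variable (R p M) in
def zeroEquiv : FStar R p 0 M ≃ₗ[R] M where
  toFun x := x
  invFun x := mk R p 0 x
  map_add' _ _ := rfl
  map_smul' r x := by
    show (r ^ p ^ 0) • (out x : M) = r • out x
    rw [pow_zero, pow_one]
  left_inv _ := rfl
  right_inv _ := rfl

@[simp]
theorem zeroEquiv_mk (x : M) : zeroEquiv R p M (mk R p 0 x) = x := rfl

variable (R p M) in
def iterEquiv (a b : ℕ) : FStar R p a (FStar R p b M) ≃ₗ[R] FStar R p (a + b) M where
  toFun x := x
  invFun x := x
  map_add' _ _ := rfl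
  map_smul' r x := by
    show (r ^ p ^ a) ^ p ^ b • (out (out x) : M) = r ^ p ^ (a + b) • out (out x)
    rw [← pow_mul, ← pow_add]
  left_inv _ := rfl
  right_inv _ := rfl

end Module

variable (R p) in
def frobenius (a b : ℕ) : FStar R p a R →ₗ[R] FStar R p (a + b) R where
  toFun x := mk R p (a + b) (out x ^ p ^ b)
  map_add' x y := add_pow_expChar_pow (out x) (out y) p b
  map_smul' r x := by
    show (r ^ p ^ a * out x) ^ p ^ b = r ^ p ^ (a + b) * out x ^ p ^ b
    rw [mul_pow, ← pow_mul, ← pow_add]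

@[simp]
theorem frobenius_mk (a b : ℕ) (x : R) :
    frobenius R p a b (mk R p a x) = mk R p (a + b) (x ^ p ^ b) := rfl

end FStar

theorem FFinite.finite_fstar {R : Type u} [CommRing R] {p : ℕ} [Fact p.Prime] [CharP R p]
    (hFF : FFinite R p) (e : ℕ) : Module.Finite R (FStar R p e R) := by
  show (iterateFrobenius R p e).Finite
  induction e with
  | zero => exact iterateFrobenius_zero R p ▸ RingHom.Finite.id R
  | succ e ih => exact iterateFrobenius_add R p e 1 ▸ ih.comp hFF

theorem exists_splitting_of_le {R : Type u} [CommRing R] {p : ℕ} [ExpChar R p] {e₀ e : ℕ}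
    (he : e ≤ e₀) {c : R} (φ : FStar R p e₀ R →ₗ[R] R) (hφ : φ (FStar.mk R p e₀ c) = 1) :
    ∃ ψ : FStar R p e R →ₗ[R] R, ψ (FStar.mk R p e 1) = 1 := by
  obtain ⟨k, rfl⟩ := Nat.exists_eq_add_of_le he
  exact ⟨φ ∘ₗ FStar.map_s19 (e + k) (LinearMap.mulLeft R c) ∘ₗ FStar.frobenius R p e k,
    by simpa using hφ⟩

section FreeRank

variable {R : Type u} [CommRing R] [StrongRankCondition R] {M : Type v} [AddCommGroup M]
  [Module R M] [Module.Finite R M] {ι : Type*} [Fintype ι]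

theorem card_le_frk_of_surjective (f : M →ₗ[R] (ι → R)) (hf : Function.Surjective f) :
    Fintype.card ι ≤ frk R M := by
  obtain ⟨k, g, hg⟩ := Module.Finite.exists_fin' R M
  have hbdd : BddAbove {n | ∃ f : M →ₗ[R] (Fin n → R), Function.Surjective f} :=
    ⟨k, fun n ⟨f, hf⟩ => le_of_fin_surjective R (f ∘ₗ g) (hf.comp hg)⟩
  let σ := LinearEquiv.funCongrLeft R R (Fintype.equivFin ι).symm
  exact le_csSup hbdd ⟨σ.toLinearMap ∘ₗ f, σ.surjective.comp hf⟩

theorem card_le_frk_of_forall_single (f : M →ₗ[R] (ι → R)) (x : ι → M)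
    (hx : ∀ i, f (x i) = Pi.single i 1) : Fintype.card ι ≤ frk R M := by
  refine card_le_frk_of_surjective f (LinearMap.range_eq_top.1 (eq_top_iff.2 ?_))
  rw [← (Pi.basisFun R ι).span_eq, Submodule.span_le]
  rintro _ ⟨i, rfl⟩
  exact ⟨x i, by rw [hx, Pi.basisFun_apply]⟩

end FreeRank

section Localization

open nonZeroDivisors

theorem finrank_fractionRing_localizedModule {R : Type u} [CommRing R] [IsDomain R]
    (M : Type v) [AddCommGroup M] [Module R M] :
    Module.finrank (FractionRing R) (LocalizedModule R⁰ M) = Module.finrank R M := by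
  rw [IsFractionRing.finrank_right_eq R (FractionRing R)]
  exact IsLocalizedModule.finrank_eq R⁰ (LocalizedModule.mkLinearMap R⁰ M) le_rfl

variable {R : Type u} [CommRing R] {S : Submonoid R}
  {M N M' N' : Type*} [AddCommGroup M] [Module R M] [AddCommGroup N] [Module R N]
  [AddCommGroup M'] [Module R M'] [AddCommGroup N'] [Module R N']

theorem IsLocalizedModule.injective_of_isTorsionFree (hS : S ≤ R⁰) [Module.IsTorsionFree R M]
    (f : M →ₗ[R] M') [IsLocalizedModule S f] : Function.Injective f :=
  (IsLocalizedModule.injective_iff_isRegular S f).2 fun c =>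
    (isRegular_iff_mem_nonZeroDivisors.2 (hS c.2)).isSMulRegular

variable (S) in
theorem IsLocalizedModule.exists_lift_of_injective [Module.Finite R M] (g : N →ₗ[R] N')
    [IsLocalizedModule S g] (hg : Function.Injective g) (φ : M →ₗ[R] N') :
    ∃ s ∈ S, ∃ ψ : M →ₗ[R] N, g ∘ₗ ψ = s • φ := by
  obtain ⟨σ, hσ⟩ := ‹Module.Finite R M›
  obtain ⟨s, hs⟩ := IsLocalizedModule.exist_integer_multiples S g σ φ
  have hrange : LinearMap.range ((s : R) • φ) ≤ LinearMap.range g := by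
    rw [LinearMap.range_eq_map, ← hσ, Submodule.map_span_le]
    exact hs
  let g' := LinearEquiv.ofInjective g hg
  refine ⟨s, s.2, g'.symm.toLinearMap ∘ₗ ((s : R) • φ).codRestrict _ fun x => hrange ⟨x, rfl⟩, ?_⟩
  ext x
  exact congrArg Subtype.val (g'.apply_symm_apply ⟨_, hrange ⟨x, rfl⟩⟩)

variable (S) in
theorem exists_comp_eq_smul_id_of_linearEquiv [Module.Finite R M] [Module.Finite R N]
    (f : M →ₗ[R] M') [IsLocalizedModule S f] (hf : Function.Injective f)
    (g : N →ₗ[R] N') [IsLocalizedModule S g] (hg : Function.Injective g) (e : M' ≃ₗ[R] N') :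
    ∃ c ∈ S, ∃ (π : M →ₗ[R] N) (h : N →ₗ[R] M),
      h ∘ₗ π = c • LinearMap.id ∧ π ∘ₗ h = c • LinearMap.id := by
  obtain ⟨s, hs, π, hπ⟩ := IsLocalizedModule.exists_lift_of_injective S g hg (e.toLinearMap ∘ₗ f)
  obtain ⟨t, ht, h, hh⟩ :=
    IsLocalizedModule.exists_lift_of_injective S f hf (e.symm.toLinearMap ∘ₗ g)
  refine ⟨t * s, S.mul_mem ht hs, π, h, LinearMap.ext fun x => hf ?_,
    LinearMap.ext fun y => hg ?_⟩
  · calc f (h (π x)) = t • e.symm (g (π x)) := LinearMap.congr_fun hh (π x)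
      _ = t • e.symm (s • e (f x)) := by rw [← LinearMap.comp_apply g π, hπ]; rfl
      _ = f ((t * s) • x) := by rw [map_smul, e.symm_apply_apply, map_smul, smul_smul]
  · calc g (π (h y)) = s • e (f (h y)) := LinearMap.congr_fun hπ (h y)
      _ = s • e (t • e.symm (g y)) := by rw [← LinearMap.comp_apply f h, hh]; rfl
      _ = g ((t * s) • y) := by rw [map_smul, e.apply_symm_apply, map_smul, smul_smul, mul_comm]

end Localization

/-- Up to the factor `d`, the elements `F^e_* (d * gen i)` form a basis of `F^e_* R` with dual
coordinates `coord i`. Requiring the basis elements to be multiples of `d` inside `F^e_* R` is what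
keeps the constant `d` unchanged under `FrobeniusFrame.comp`. -/
structure FrobeniusFrame (R : Type u) [CommRing R] (p : ℕ) [ExpChar R p] (e : ℕ) (d : R)
    (ι : Type*) [Fintype ι] where
  coord : ι → (FStar R p e R →ₗ[R] R)
  gen : ι → R
  sum_coord_pow_mul_gen (x : R) :
    ∑ i, coord i (FStar.mk R p e x) ^ p ^ e * gen i = d ^ (p ^ e - 1) * x
  coord_mul_gen (i j : ι) : coord i (FStar.mk R p e (d * gen j)) = if i = j then d else 0

namespace FrobeniusFrame

section ExpChar

variable {R : Type u} [CommRing R] {p : ℕ} [ExpChar R p] {d : R}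
  {ι κ : Type*} [Fintype ι] [Fintype κ]

def zero [Unique ι] (d : R) : FrobeniusFrame R p 0 d ι where
  coord _ := (FStar.zeroEquiv R p R).toLinearMap
  gen _ := 1
  sum_coord_pow_mul_gen x := by simp
  coord_mul_gen i j := by simp [Subsingleton.elim i j]

def reindex {e : ℕ} (F : FrobeniusFrame R p e d ι) (σ : ι ≃ κ) : FrobeniusFrame R p e d κ where
  coord := F.coord ∘ σ.symm
  gen := F.gen ∘ σ.symm
  sum_coord_pow_mul_gen x := by
    simpa using (σ.symm.sum_comp fun i => F.coord i (FStar.mk R p e x) ^ p ^ e * F.gen i).trans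
      (F.sum_coord_pow_mul_gen x)
  coord_mul_gen i j := by simp [F.coord_mul_gen]

def comp {a b : ℕ} (F : FrobeniusFrame R p a d ι) (G : FrobeniusFrame R p b d κ) :
    FrobeniusFrame R p (a + b) d (ι × κ) where
  coord jl := F.coord jl.1 ∘ₗ FStar.map_s19 a (G.coord jl.2) ∘ₗ
    (FStar.iterEquiv R p R a b).symm.toLinearMap
  gen jl := F.gen jl.1 ^ p ^ b * G.gen jl.2
  sum_coord_pow_mul_gen x := by
    set y := fun l => G.coord l (FStar.mk R p b x)
    have inner : ∀ l, ∑ j, F.coord j (FStar.mk R p a (y l)) ^ p ^ (a + b) *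
        (F.gen j ^ p ^ b * G.gen l) = d ^ ((p ^ a - 1) * p ^ b) * (y l ^ p ^ b * G.gen l) := by
      intro l
      rw [pow_mul, ← mul_assoc, ← mul_pow, ← F.sum_coord_pow_mul_gen, sum_pow_char_pow,
        Finset.sum_mul]
      refine Finset.sum_congr rfl fun j _ => ?_
      rw [pow_add, pow_mul]
      ring
    calc _ = ∑ l, ∑ j, F.coord j (FStar.mk R p a (y l)) ^ p ^ (a + b) *
          (F.gen j ^ p ^ b * G.gen l) := Fintype.sum_prod_type_right _
      _ = d ^ ((p ^ a - 1) * p ^ b) * (d ^ (p ^ b - 1) * x) := by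
        rw [Finset.sum_congr rfl fun l _ => inner l, ← Finset.mul_sum, G.sum_coord_pow_mul_gen]
      _ = d ^ (p ^ (a + b) - 1) * x := by
        rw [← mul_assoc, ← pow_add, Nat.pow_sub_one_mul_add_pow_sub_one (expChar_pos R p)]
  coord_mul_gen ik jl := by
    obtain ⟨i, k⟩ := ik
    obtain ⟨j, l⟩ := jl
    have hmk : FStar.mk R p b (d * (F.gen j ^ p ^ b * G.gen l)) =
        F.gen j • FStar.mk R p b (d * G.gen l) := by
      rw [FStar.smul_mk, mul_left_comm]
    show F.coord i (FStar.mk R p a (G.coord k (FStar.mk R p b _))) = _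
    rw [hmk, map_smul, G.coord_mul_gen]
    by_cases hkl : k = l
    · simp [hkl, mul_comm, F.coord_mul_gen]
    · simp [hkl]

def pow (F : FrobeniusFrame R p 1 d ι) : (e : ℕ) → FrobeniusFrame R p e d (Fin e → ι)
  | 0 => zero d
  | e + 1 => ((F.pow e).comp F).reindex ((Equiv.prodComm _ _).trans (Fin.snocEquiv fun _ => ι))

theorem finrank_le [IsDomain R] {e : ℕ} (F : FrobeniusFrame R p e d ι) (hd : d ≠ 0) :
    Module.finrank R (FStar R p e R) ≤ Fintype.card ι := by
  have hinj : Function.Injective (LinearMap.pi F.coord) := by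
    refine (injective_iff_map_eq_zero _).2 fun x hx => ?_
    have h := F.sum_coord_pow_mul_gen (FStar.out x)
    simp_rw [FStar.mk_out, show ∀ i, F.coord i x = 0 from congrFun hx,
      zero_pow (expChar_pow_pos R p e).ne', zero_mul, Finset.sum_const_zero] at h
    exact (mul_eq_zero.1 h.symm).resolve_left (pow_ne_zero _ hd)
  simpa using LinearMap.finrank_le_finrank_of_injective hinj

theorem card_le_frk [Nontrivial R] {e₀ e : ℕ} [Module.Finite R (FStar R p (e₀ + e) R)]
    (F : FrobeniusFrame R p e d ι) (φ : FStar R p e₀ R →ₗ[R] R) (hφ : φ (FStar.mk R p e₀ d) = 1) :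
    Fintype.card ι ≤ frk R (FStar R p (e₀ + e) R) := by
  refine card_le_frk_of_forall_single (LinearMap.pi fun i => φ ∘ₗ FStar.map_s19 e₀ (F.coord i) ∘ₗ
    (FStar.iterEquiv R p R e₀ e).symm.toLinearMap) (fun j => FStar.mk R p _ (d * F.gen j))
    fun j => funext fun i => ?_
  show φ (FStar.mk R p e₀ (F.coord i (FStar.mk R p e (d * F.gen j)))) = _
  rw [F.coord_mul_gen, Pi.single_apply]
  split_ifs <;> simp [hφ]

end ExpChar

variable {R : Type u} [CommRing R] {p : ℕ} [Fact p.Prime] [CharP R p] {ι : Type*} [Fintype ι]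

def ofSMulId (c : R) (π : FStar R p 1 R →ₗ[R] (ι → R)) (h : (ι → R) →ₗ[R] FStar R p 1 R)
    (hπ : h ∘ₗ π = c • LinearMap.id) (hh : π ∘ₗ h = c • LinearMap.id) :
    FrobeniusFrame R p 1 (c ^ p) ι where
  -- `π (F_* (c ^ p * gen j)) = π (c • h (single j 1)) = c ^ 2 • single j 1`, so the factor
  -- `c ^ (p - 2)` is what brings the diagonal entries to `d = c ^ p`
  coord i := c ^ (p - 2) • (LinearMap.proj i ∘ₗ π)
  gen i := FStar.out (h (Pi.single i 1))
  sum_coord_pow_mul_gen x := by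
    have hp : p - 2 + 1 = p - 1 := by have := (Fact.out : p.Prime).two_le; omega
    have hx : ∑ i, π (FStar.mk R p 1 x) i ^ p * FStar.out (h (Pi.single i 1)) = c ^ p * x := by
      have := congrArg FStar.out (LinearMap.congr_fun hπ (FStar.mk R p 1 x))
      rw [LinearMap.comp_apply, pi_eq_sum_univ' (π _), map_sum, FStar.out_sum] at this
      simpa [FStar.out_smul, FStar.smul_mk] using this
    simp only [LinearMap.smul_apply, LinearMap.comp_apply, LinearMap.proj_apply, smul_eq_mul,
      pow_one, mul_pow, mul_assoc, ← Finset.mul_sum, hx]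
    rw [← mul_assoc, ← pow_mul, ← pow_add, ← pow_mul, ← hp]
    ring
  coord_mul_gen i j := by
    have hmk : FStar.mk R p 1 (c ^ p * FStar.out (h (Pi.single j 1))) = c • h (Pi.single j 1) := by
      show _ = FStar.mk R p 1 (c ^ p ^ 1 * FStar.out _)
      rw [pow_one]
    have hpp : p - 2 + 1 + 1 = p := by have := (Fact.out : p.Prime).two_le; omega
    simp only [LinearMap.smul_apply, LinearMap.comp_apply, LinearMap.proj_apply, smul_eq_mul,
      hmk, map_smul, ← LinearMap.comp_apply π h, hh, LinearMap.id_apply, Pi.single_apply]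
    split_ifs
    · rw [mul_one, ← pow_succ, ← pow_succ', hpp]
    · simp

end FrobeniusFrame

open nonZeroDivisors in
theorem FFinite.exists_frobeniusFrame {R : Type u} [CommRing R] [IsDomain R] {p : ℕ}
    [Fact p.Prime] [CharP R p] (hFF : FFinite R p) :
    ∃ d ≠ (0 : R), Nonempty (FrobeniusFrame R p 1 d (Fin (Module.finrank R (FStar R p 1 R)))) := by
  have : Module.Finite R (FStar R p 1 R) := hFF
  set n := Module.finrank R (FStar R p 1 R)
  let f := LocalizedModule.mkLinearMap R⁰ (FStar R p 1 R)
  let g := LocalizedModule.mkLinearMap R⁰ (Fin n → R)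
  have := Module.Finite.of_isLocalizedModule R⁰ (Rₚ := FractionRing R) f
  have := Module.Finite.of_isLocalizedModule R⁰ (Rₚ := FractionRing R) g
  have hrank : Module.finrank (FractionRing R) (LocalizedModule R⁰ (FStar R p 1 R)) =
      Module.finrank (FractionRing R) (LocalizedModule R⁰ (Fin n → R)) := by
    rw [finrank_fractionRing_localizedModule, finrank_fractionRing_localizedModule,
      Module.finrank_fin_fun]
  obtain ⟨c, hc, π, h, hπ, hh⟩ := exists_comp_eq_smul_id_of_linearEquiv R⁰
    f (IsLocalizedModule.injective_of_isTorsionFree le_rfl f)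
    g (IsLocalizedModule.injective_of_isTorsionFree le_rfl g)
    ((LinearEquiv.ofFinrankEq _ _ hrank).restrictScalars R)
  exact ⟨c ^ p, pow_ne_zero _ (nonZeroDivisors.ne_zero hc),
    ⟨FrobeniusFrame.ofSMulId c π h hπ hh⟩⟩

theorem strongly_F_regular_splitting_numbers_bound_general
    (R : Type u) [CommRing R] [IsDomain R]
    (p : ℕ) [Fact p.Prime] [CharP R p] (hFF : FFinite R p)
    (hSF : StronglyFRegular R p) :
    ∃ ε : ℝ, 0 < ε ∧ ∀ e : ℕ, 1 ≤ e →
      ε * (Module.finrank (FractionRing R)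
          (LocalizedModule (nonZeroDivisors R) (FStar R p e R)) : ℝ) ≤
        (frk R (FStar R p e R) : ℝ) := by
  obtain ⟨d, hd, ⟨F⟩⟩ := hFF.exists_frobeniusFrame
  obtain ⟨e₀, -, φ, hφ⟩ := hSF d hd
  set m := Module.finrank R (FStar R p 1 R)
  have hrank (e : ℕ) : Module.finrank R (FStar R p e R) ≤ m ^ e := by
    simpa using (F.pow e).finrank_le hd
  have hfrk (e : ℕ) : m ^ (e - e₀) ≤ frk R (FStar R p e R) := by
    have := hFF.finite_fstar e
    rcases le_total e e₀ with he | he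
    · obtain ⟨ψ, hψ⟩ := exists_splitting_of_le he φ hφ
      simpa [Nat.sub_eq_zero_of_le he] using (FrobeniusFrame.zero (ι := Unit) 1).card_le_frk ψ hψ
    · obtain ⟨k, rfl⟩ := Nat.exists_eq_add_of_le he
      simpa using (F.pow k).card_le_frk φ hφ
  -- `m + 1` rather than `m` keeps `ε` positive without having to show `m ≠ 0`
  refine ⟨((m + 1 : ℝ) ^ e₀)⁻¹, by positivity, fun e _ => ?_⟩
  rw [finrank_fractionRing_localizedModule, inv_mul_le_iff₀ (by positivity)]
  exact_mod_cast (hrank e).trans ((Nat.pow_le_succ_pow_mul_pow_sub m e e₀).trans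
    (Nat.mul_le_mul_left _ (hfrk e)))

/-- over a strongly F-regular F-finite domain, the splitting numbers grow at
least like a positive multiple of the generic rank of `F^e_* R`. -/
theorem strongly_F_regular_splitting_numbers_bound
    (R : Type u) [CommRing R] [IsDomain R] [IsNoetherianRing R]
    (p : ℕ) [Fact p.Prime] [CharP R p] (hFF : FFinite R p)
    (hSF : StronglyFRegular R p) :
    ∃ ε : ℝ, 0 < ε ∧ ∀ e : ℕ, 1 ≤ e →
      ε * (Module.finrank (FractionRing R)
          (LocalizedModule (nonZeroDivisors R) (FStar R p e R)) : ℝ) ≤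
        (frk R (FStar R p e R) : ℝ) :=
  strongly_F_regular_splitting_numbers_bound_general R p hFF hSF
end
end
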